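/- arXiv:2105.04855 — 2 statements merged into one kernel-verified Lean document; each statement's English description precedes it below -/
import Mathlib

section
/- Let φ : ℝ^d → ℝ be twice continuously differentiable and suppose there exist λ ∈ ℝ with λ ≠ 0, vectors α, β ∈ ℝ^d, and γ ∈ ℝ such that φ(x) + (1/2) ∇φ(x)·x + α·∇φ(x) = (λ/4)|x|² + β·x + γ for all x ∈ ℝ^d. Then φ is a quadratic polynomial: φ(x) = (λ/8)|x|² + b₀·x + c₀ with b₀ = (2/3)(β − (λ/4)α) and c₀ = γ − (2/3)α·(β − (λ/4)α). -/
/-!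
Subtracting the quadratic particular solution leaves `ψ` with `ψ(x) + (1/2) Dψ(x)(x + 2α) = 0`,
i.e. `ψ` is homogeneous of degree `-2` about the point `-2α`. Along each ray `t ↦ -2α + t(x + 2α)`
the function `t ↦ t² ψ(-2α + t(x + 2α))` then has zero derivative, so its value `ψ(x)` at `t = 1`
equals its value `0` at `t = 0`.
-/

open scoped RealInnerProductSpace

theorem eq_zero_of_fderiv_apply_sub_eq_neg_mul {E : Type*} [NormedAddCommGroup E]
    [NormedSpace ℝ E] {ψ : E → ℝ} (hψ : Differentiable ℝ ψ) {k : ℕ} (hk : k ≠ 0) (p : E)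
    (hEuler : ∀ x, fderiv ℝ ψ x (x - p) = -k * ψ x) (x : E) : ψ x = 0 := by
  obtain ⟨j, rfl⟩ := Nat.exists_eq_succ_of_ne_zero hk
  set c : ℝ → E := fun t => p + t • (x - p)
  have hc (t : ℝ) : HasDerivAt c (x - p) t :=
    (((hasDerivAt_id' t).smul_const (x - p)).const_add p).congr_deriv (one_smul ℝ _)
  have hderiv (t : ℝ) : HasDerivAt (fun t => t ^ (j + 1) * ψ (c t)) 0 t := by
    have hEuler_c : t * fderiv ℝ ψ (c t) (x - p) = -(j + 1 : ℕ) * ψ (c t) := by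
      rw [← hEuler, ← smul_eq_mul, ← map_smul]
      simp [c]
    refine ((hasDerivAt_pow (j + 1) t).mul
      ((hψ (c t)).hasFDerivAt.comp_hasDerivAt t (hc t))).congr_deriv ?_
    simp only [Function.comp_apply, Nat.add_sub_cancel]
    linear_combination t ^ j * hEuler_c
  have hconst := is_const_of_deriv_eq_zero (fun t => (hderiv t).differentiableAt)
    (fun t => (hderiv t).deriv) 1 0
  simpa [c] using hconst

theorem hasFDerivAt_quadratic {F : Type*} [NormedAddCommGroup F] [InnerProductSpace ℝ F]
    (a : ℝ) (b : F) (c : ℝ) (x : F) :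
    HasFDerivAt (fun y => a * ‖y‖ ^ 2 + ⟪b, y⟫ + c) ((2 * a) • innerSL ℝ x + innerSL ℝ b) x :=
  ((((hasStrictFDerivAt_norm_sq x).hasFDerivAt.const_mul a).add
    (innerSL ℝ b).hasFDerivAt).add_const c).congr_fderiv (by
      ext v
      simp only [add_apply, smul_apply, coe_innerSL_apply, nsmul_eq_mul, smul_eq_mul]
      ring)

theorem stmt10_general {d : ℕ} (φ : EuclideanSpace ℝ (Fin d) → ℝ) (hφ : ContDiff ℝ 2 φ)
    (lam : ℝ) (α β : EuclideanSpace ℝ (Fin d)) (γ : ℝ)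
    (heq : ∀ x : EuclideanSpace ℝ (Fin d),
      φ x + (1 / 2) * ⟪gradient φ x, x⟫ + ⟪α, gradient φ x⟫
        = lam / 4 * ‖x‖ ^ 2 + ⟪β, x⟫ + γ) :
    ∀ x : EuclideanSpace ℝ (Fin d),
      φ x = lam / 8 * ‖x‖ ^ 2 + ⟪(2 / 3 : ℝ) • (β - (lam / 4) • α), x⟫
        + (γ - (2 / 3) * ⟪α, β - (lam / 4) • α⟫) := by
  set b := (2 / 3 : ℝ) • (β - (lam / 4) • α)
  set c := γ - (2 / 3) * ⟪α, β - (lam / 4) • α⟫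
  have hdiff : Differentiable ℝ φ := hφ.differentiable (by norm_num)
  have hψ (x : EuclideanSpace ℝ (Fin d)) :=
    (hdiff x).hasFDerivAt.sub (hasFDerivAt_quadratic (lam / 8) b c x)
  refine fun x => sub_eq_zero.1 <|
    eq_zero_of_fderiv_apply_sub_eq_neg_mul (fun x => (hψ x).differentiableAt) two_ne_zero
      (-(2 : ℝ) • α) (fun y => ?_) x
  rw [(hψ y).fderiv]
  simp only [Pi.sub_apply, sub_apply, add_apply, smul_apply, innerSL_apply_apply,
    ← inner_gradient_left]
  simp only [b, c, neg_smul, sub_neg_eq_add, inner_add_right, inner_sub_left, inner_sub_right,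
    real_inner_smul_left, real_inner_smul_right, real_inner_self_eq_norm_sq]
  linear_combination 2 * heq y + 2 * real_inner_comm α (gradient φ y)
    - lam / 2 * real_inner_comm α y - 4 / 3 * real_inner_comm α β

/-- If a `C²` potential `φ` satisfies
`φ(x) + (1/2)∇φ(x)·x + α·∇φ(x) = (λ/4)|x|² + β·x + γ` with `λ ≠ 0`, then `φ` is the
quadratic polynomial `φ(x) = (λ/8)|x|² + b₀·x + c₀` with
`b₀ = (2/3)(β − (λ/4)α)` and `c₀ = γ − (2/3)α·(β − (λ/4)α)`. -/
theorem stmt10 {d : ℕ} (φ : EuclideanSpace ℝ (Fin d) → ℝ) (hφ : ContDiff ℝ 2 φ)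
    (lam : ℝ) (hlam : lam ≠ 0) (α β : EuclideanSpace ℝ (Fin d)) (γ : ℝ)
    (heq : ∀ x : EuclideanSpace ℝ (Fin d),
      φ x + (1 / 2) * ⟪gradient φ x, x⟫ + ⟪α, gradient φ x⟫
        = lam / 4 * ‖x‖ ^ 2 + ⟪β, x⟫ + γ) :
    ∀ x : EuclideanSpace ℝ (Fin d),
      φ x = lam / 8 * ‖x‖ ^ 2 + ⟪(2 / 3 : ℝ) • (β - (lam / 4) • α), x⟫
        + (γ - (2 / 3) * ⟪α, β - (lam / 4) • α⟫) :=
  stmt10_general φ hφ lam α β γ heq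
end

section
/- Let λ, α > 0 and let F : [0,∞) → [0,∞) be a differentiable function satisfying, for some constants K, M ≥ 0 and all R > 0, t ≥ 0: F'(t) ≤ −λ(1+R²)^{−α/2} F(t) + K (1+R²)^{−α/2} e^{−βR²/2} M. Then, choosing 1+R² = t^{2/(2+α)}, there exist explicit constants C, Λ > 0 (depending on λ, α, β, K) such that F(t) ≤ C·exp(−Λ t^{2/(2+α)})·(F(0) + M) for all t ≥ 0. -/
/-!
For a fixed radius `R` the differential inequality is linear with constant coefficients,
so Grönwall gives `F t ≤ e^{-λ (1+R²)^{-α/2} t} F 0 + (K/λ) e^{-βR²/2} M`. For `t > 1` take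
`1 + R² = t^θ` with `θ = 2/(2+α)`; since `θ · (-α/2) + 1 = θ`, the rate becomes `λ t^θ` and
the error term `e^{-β(t^θ - 1)/2}`, both stretched exponentials. For `t ≤ 1` the crude bound
with `R = 1` suffices.
-/

open Real Set

theorem sub_le_exp_mul_sub_of_deriv_le {F : ℝ → ℝ} {μ A t : ℝ} (hF : Differentiable ℝ F)
    (h : ∀ s, 0 ≤ s → deriv F s ≤ -μ * F s + μ * A) (ht : 0 ≤ t) :
    F t - A ≤ exp (-(μ * t)) * (F 0 - A) := by
  set g : ℝ → ℝ := fun s => exp (μ * s) * (F s - A)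
  have hg : ∀ s, HasDerivAt g (exp (μ * s) * (μ * (F s - A) + deriv F s)) s := fun s => by
    refine (((hasDerivAt_id s).const_mul μ).exp.mul ((hF s).hasDerivAt.sub_const A)).congr_deriv ?_
    simp only [id, mul_one]
    ring
  have hg_anti : AntitoneOn g (Icc 0 t) := by
    refine antitoneOn_of_deriv_nonpos (convex_Icc 0 t)
      (fun s _ => (hg s).continuousAt.continuousWithinAt)
      (fun s _ => (hg s).differentiableAt.differentiableWithinAt) fun s hs => ?_
    rw [interior_Icc] at hs
    rw [(hg s).deriv]
    exact mul_nonpos_of_nonneg_of_nonpos (exp_pos _).le (by linarith [h s hs.1.le])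
  have hgt : g t ≤ g 0 := hg_anti (left_mem_Icc.mpr ht) (right_mem_Icc.mpr ht) ht
  calc F t - A = exp (-(μ * t)) * g t := by
        simp only [g, ← mul_assoc, ← exp_add, neg_add_cancel, exp_zero, one_mul]
    _ ≤ exp (-(μ * t)) * (F 0 - A) := by
        gcongr
        simpa [g] using hgt

theorem le_exp_mul_add_of_deriv_le {F : ℝ → ℝ} {μ A t : ℝ} (hF : Differentiable ℝ F)
    (hA : 0 ≤ A) (h : ∀ s, 0 ≤ s → deriv F s ≤ -μ * F s + μ * A) (ht : 0 ≤ t) :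
    F t ≤ exp (-(μ * t)) * F 0 + A := by
  have := sub_le_exp_mul_sub_of_deriv_le hF h ht
  nlinarith [mul_nonneg (exp_pos (-(μ * t))).le hA]

theorem rpow_two_div_two_add_rpow_neg_half_mul_self {α t : ℝ} (hα : 2 + α ≠ 0) (ht : 0 < t) :
    (t ^ (2 / (2 + α))) ^ (-(α / 2)) * t = t ^ (2 / (2 + α)) := by
  have hexp : 2 / (2 + α) * -(α / 2) + 1 = 2 / (2 + α) := by
    field_simp
    ring
  rw [← rpow_mul ht.le, ← rpow_add_one ht.ne', hexp]

def WeakDissipation (lam α β K M : ℝ) (F : ℝ → ℝ) : Prop :=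
  ∀ R > (0 : ℝ), ∀ t, 0 ≤ t →
    deriv F t ≤ -lam * (1 + R ^ 2) ^ (-(α / 2)) * F t
      + K * (1 + R ^ 2) ^ (-(α / 2)) * exp (-β * R ^ 2 / 2) * M

namespace WeakDissipation

variable {lam α β K M : ℝ} {F : ℝ → ℝ}

theorem le_at_radius (h : WeakDissipation lam α β K M F) (hlam : 0 < lam) (hK : 0 ≤ K)
    (hM : 0 ≤ M) (hF : Differentiable ℝ F) {R : ℝ} (hR : 0 < R) {t : ℝ} (ht : 0 ≤ t) :
    F t ≤ exp (-(lam * (1 + R ^ 2) ^ (-(α / 2)) * t)) * F 0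
      + K / lam * exp (-β * R ^ 2 / 2) * M :=
  le_exp_mul_add_of_deriv_le hF (by positivity)
    (fun s hs => (h R hR s hs).trans_eq (by field_simp)) ht

theorem le_add (h : WeakDissipation lam α β K M F) (hlam : 0 < lam) (hβ : 0 ≤ β)
    (hK : 0 ≤ K) (hM : 0 ≤ M) (hF : Differentiable ℝ F) (hF0 : 0 ≤ F 0) {t : ℝ}
    (ht : 0 ≤ t) :
    F t ≤ F 0 + K / lam * M := by
  have hrate : exp (-(lam * (1 + 1 ^ 2) ^ (-(α / 2)) * t)) ≤ 1 :=
    exp_le_one_iff.mpr (neg_nonpos.mpr (by positivity))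
  have herr : exp (-β * 1 ^ 2 / 2) ≤ 1 := exp_le_one_iff.mpr (by nlinarith)
  calc F t ≤ exp (-(lam * (1 + 1 ^ 2) ^ (-(α / 2)) * t)) * F 0
        + K / lam * exp (-β * 1 ^ 2 / 2) * M := h.le_at_radius hlam hK hM hF one_pos ht
    _ ≤ 1 * F 0 + K / lam * 1 * M := by gcongr
    _ = F 0 + K / lam * M := by ring

theorem le_of_one_lt (h : WeakDissipation lam α β K M F) (hlam : 0 < lam) (hα : 0 < α)
    (hK : 0 ≤ K) (hM : 0 ≤ M) (hF : Differentiable ℝ F) {t : ℝ} (ht : 1 < t) :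
    F t ≤ exp (-(lam * t ^ (2 / (2 + α)))) * F 0
      + K / lam * exp (-β * (t ^ (2 / (2 + α)) - 1) / 2) * M := by
  have ht0 : 0 < t := one_pos.trans ht
  have hθ : 1 < t ^ (2 / (2 + α)) := one_lt_rpow ht (by positivity)
  have hR : sqrt (t ^ (2 / (2 + α)) - 1) ^ 2 = t ^ (2 / (2 + α)) - 1 := sq_sqrt (by linarith)
  have hR0 : 0 < sqrt (t ^ (2 / (2 + α)) - 1) := sqrt_pos.mpr (by linarith)
  have := h.le_at_radius hlam hK hM hF hR0 ht0.le
  rwa [hR, add_sub_cancel, mul_assoc,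
    rpow_two_div_two_add_rpow_neg_half_mul_self (by linarith) ht0] at this

theorem le_exp_neg_mul_rpow_sub_one (h : WeakDissipation lam α β K M F) (hlam : 0 < lam)
    (hα : 0 < α) (hK : 0 ≤ K) (hM : 0 ≤ M) (hF : Differentiable ℝ F)
    (hF0 : 0 ≤ F 0) {Λ : ℝ} (hΛ : 0 ≤ Λ) (hΛlam : Λ ≤ lam) (hΛβ : Λ ≤ β / 2) {t : ℝ}
    (ht : 0 ≤ t) :
    F t ≤ exp (-Λ * (t ^ (2 / (2 + α)) - 1)) * (F 0 + K / lam * M) := by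
  rcases le_or_gt t 1 with ht1 | ht1
  · have hθ : t ^ (2 / (2 + α)) ≤ 1 := rpow_le_one ht ht1 (by positivity)
    have hexp : 1 ≤ exp (-Λ * (t ^ (2 / (2 + α)) - 1)) := one_le_exp (by nlinarith)
    calc F t ≤ F 0 + K / lam * M := h.le_add hlam (by linarith) hK hM hF hF0 ht
      _ ≤ exp (-Λ * (t ^ (2 / (2 + α)) - 1)) * (F 0 + K / lam * M) :=
        le_mul_of_one_le_left (by positivity) hexp
  · have hθ : 1 < t ^ (2 / (2 + α)) := one_lt_rpow ht1 (by positivity)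
    have hrate : exp (-(lam * t ^ (2 / (2 + α)))) ≤ exp (-Λ * (t ^ (2 / (2 + α)) - 1)) :=
      exp_le_exp.mpr (by nlinarith)
    have herr : exp (-β * (t ^ (2 / (2 + α)) - 1) / 2) ≤ exp (-Λ * (t ^ (2 / (2 + α)) - 1)) :=
      exp_le_exp.mpr (by nlinarith)
    calc F t ≤ exp (-(lam * t ^ (2 / (2 + α)))) * F 0
          + K / lam * exp (-β * (t ^ (2 / (2 + α)) - 1) / 2) * M :=
          h.le_of_one_lt hlam hα hK hM hF ht1
      _ ≤ exp (-Λ * (t ^ (2 / (2 + α)) - 1)) * F 0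
          + K / lam * exp (-Λ * (t ^ (2 / (2 + α)) - 1)) * M := by gcongr
      _ = exp (-Λ * (t ^ (2 / (2 + α)) - 1)) * (F 0 + K / lam * M) := by ring

end WeakDissipation

/-- Grönwall-type ODE lemma giving stretched-exponential decay: if for all `R > 0`
`F' ≤ −λ(1+R²)^{−α/2} F + K(1+R²)^{−α/2} e^{−βR²/2} M`, then (choosing `1+R² = t^{2/(2+α)}`)
there are `C, Λ > 0` with `F(t) ≤ C exp(−Λ t^{2/(2+α)}) (F(0) + M)`. -/
theorem stmt16 (lam α β K M : ℝ) (hlam : 0 < lam) (hα : 0 < α) (hβ : 0 < β)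
    (hK : 0 ≤ K) (hM : 0 ≤ M) (F : ℝ → ℝ) (hFd : Differentiable ℝ F)
    (hFnn : ∀ t, 0 ≤ t → 0 ≤ F t)
    (hineq : ∀ R > (0 : ℝ), ∀ t, 0 ≤ t →
      deriv F t ≤ -lam * (1 + R ^ 2) ^ (-(α / 2)) * F t
        + K * (1 + R ^ 2) ^ (-(α / 2)) * Real.exp (-β * R ^ 2 / 2) * M) :
    ∃ C > (0 : ℝ), ∃ Λ > (0 : ℝ), ∀ t, 0 ≤ t →
      F t ≤ C * Real.exp (-Λ * t ^ (2 / (2 + α))) * (F 0 + M) := by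
  have hF0 := hFnn 0 le_rfl
  have hΛ : 0 < min lam (β / 2) := lt_min hlam (half_pos hβ)
  refine ⟨exp (min lam (β / 2)) * (1 + K / lam), by positivity, min lam (β / 2), hΛ,
    fun t ht => ?_⟩
  have hcoef : F 0 + K / lam * M ≤ (1 + K / lam) * (F 0 + M) := by
    nlinarith [mul_nonneg (div_nonneg hK hlam.le) hF0]
  calc F t ≤ exp (-min lam (β / 2) * (t ^ (2 / (2 + α)) - 1)) * (F 0 + K / lam * M) :=
        WeakDissipation.le_exp_neg_mul_rpow_sub_one hineq hlam hα hK hM hFd hF0 hΛ.le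
          (min_le_left _ _) (min_le_right _ _) ht
    _ = exp (min lam (β / 2)) * exp (-min lam (β / 2) * t ^ (2 / (2 + α)))
          * (F 0 + K / lam * M) := by rw [← exp_add]; ring_nf
    _ ≤ exp (min lam (β / 2)) * exp (-min lam (β / 2) * t ^ (2 / (2 + α)))
          * ((1 + K / lam) * (F 0 + M)) := by gcongr
    _ = _ := by ring
end
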